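/- For d ≥ 2 and n ≥ 1, the digit-reversed DFT matrix F′ₙ = Pₙ Fₙ of dimension dⁿ×dⁿ satisfies F′ₙ = (I_d ⊗ F′_{n−1}) · (I_{d^{n−1}} ⊕ Ω_{n−1} ⊕ ⋯ ⊕ Ω_{n−1}^{d−1}) · (F_d ⊗ I_{d^{n−1}}), where F_d is the d×d unitary DFT matrix and Ω_{n−1} = diag(exp(−2πij/dⁿ))_{j=0}^{d^{n−1}−1}. -/

import Mathlib

open Matrix Complex BigOperators

noncomputable section

/-- The root of unity `ω_N = exp(-2πi/N)`. -/
def qomega (N : ℕ) : ℂ := Complex.exp (-(2 * Real.pi * Complex.I) / N)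

/-- The `N × N` DFT matrix with entries `(1/√N) ω_N^{jk}`. -/
def dftM (N : ℕ) : Matrix (Fin N) (Fin N) ℂ :=
  fun j k => ((1 / Real.sqrt N : ℝ) : ℂ) * qomega N ^ ((j : ℕ) * (k : ℕ))

/-- Kronecker product of `Fin`-indexed matrices, big-endian convention. -/
def kron {a b c d : ℕ} (A : Matrix (Fin a) (Fin b) ℂ) (B : Matrix (Fin c) (Fin d) ℂ) :
    Matrix (Fin (a * c)) (Fin (b * d)) ℂ :=
  fun i j => A i.divNat j.divNat * B i.modNat j.modNat

/-- Recast a square matrix along an equality of dimensions. -/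
def castM {a b : ℕ} (h : a = b) (A : Matrix (Fin a) (Fin a) ℂ) : Matrix (Fin b) (Fin b) ℂ :=
  A.submatrix (Fin.cast h.symm) (Fin.cast h.symm)

/-- Direct sum `A ⊕ B` of two `n × n` matrices. -/
def dsum {n : ℕ} (A B : Matrix (Fin n) (Fin n) ℂ) : Matrix (Fin (2 * n)) (Fin (2 * n)) ℂ :=
  fun i j =>
    if h1 : (i : ℕ) < n then
      if h2 : (j : ℕ) < n then A ⟨i, h1⟩ ⟨j, h2⟩ else 0
    else
      if _h2 : (j : ℕ) < n then 0
      else B ⟨(i : ℕ) - n, by have := i.isLt; omega⟩ ⟨(j : ℕ) - n, by have := j.isLt; omega⟩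

/-- `E₁ = e₁ e₁ᵀ`. -/
def E1 : Matrix (Fin 2) (Fin 2) ℂ := !![1, 0; 0, 0]

/-- `E₂ = e₂ e₂ᵀ`. -/
def E2 : Matrix (Fin 2) (Fin 2) ℂ := !![0, 0; 0, 1]

/-- The Hadamard matrix. -/
def Hm : Matrix (Fin 2) (Fin 2) ℂ := ((1 / Real.sqrt 2 : ℝ) : ℂ) • !![1, 1; 1, -1]

/-- `R_n = diag(1, ω_{2^n})`. -/
def Rm (n : ℕ) : Matrix (Fin 2) (Fin 2) ℂ :=
  Matrix.diagonal (fun k : Fin 2 => qomega (2 ^ n) ^ (k : ℕ))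

/-- `Ω_n = diag(ω_{2^{n+1}}^j)_{j=0}^{2^n - 1}`. -/
def OmegaM (n : ℕ) : Matrix (Fin (2 ^ n)) (Fin (2 ^ n)) ℂ :=
  Matrix.diagonal (fun j : Fin (2 ^ n) => qomega (2 ^ (n + 1)) ^ (j : ℕ))

/-- Bit reversal of the `n` low binary digits of `j` (big-endian reversal). -/
def bitRevNat (n j : ℕ) : ℕ := ∑ r ∈ Finset.range n, ((j / 2 ^ r) % 2) * 2 ^ (n - 1 - r)

/-- The bit-reversal permutation matrix `P_n` on `ℂ^{2^n}`:
it maps the basis vector indexed by `j` to the one indexed by the bit reversal of `j`. -/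
def Pm (n : ℕ) : Matrix (Fin (2 ^ n)) (Fin (2 ^ n)) ℂ :=
  fun i j => if (i : ℕ) = bitRevNat n (j : ℕ) then 1 else 0

/-- Kronecker product of vectors, big-endian convention. -/
def vkron {a b : ℕ} (u : Fin a → ℂ) (v : Fin b → ℂ) : Fin (a * b) → ℂ :=
  fun i => u i.divNat * v i.modNat

/-- Iterated Kronecker product `x₁ ⊗ x₂ ⊗ ⋯ ⊗ xₙ` of vectors in `ℂ²`. -/
def tkron : (n : ℕ) → (Fin n → Fin 2 → ℂ) → Fin (2 ^ n) → ℂ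
  | 0, _ => fun _ => 1
  | n + 1, v => fun i =>
      vkron (v 0) (tkron n (fun j => v j.succ)) (Fin.cast (by rw [pow_succ]; ring) i)

lemma two_mul_pow (n : ℕ) : 2 * 2 ^ n = 2 ^ (n + 1) := by rw [pow_succ]; ring


/-- Radix-`d` rotation `R_n = diag(ω_{d^n}^k)_{k=0}^{d-1}`. -/
def RmD (d n : ℕ) : Matrix (Fin d) (Fin d) ℂ :=
  Matrix.diagonal (fun k : Fin d => qomega (d ^ n) ^ (k : ℕ))

/-- Radix-`d` `Ω_n = diag(ω_{d^{n+1}}^j)_{j=0}^{d^n-1}`. -/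
def OmegaD (d n : ℕ) : Matrix (Fin (d ^ n)) (Fin (d ^ n)) ℂ :=
  Matrix.diagonal (fun j : Fin (d ^ n) => qomega (d ^ (n + 1)) ^ (j : ℕ))

/-- `E_ℓ = e_ℓ e_ℓᵀ` in dimension `d`. -/
def stdE {d : ℕ} (l : Fin d) : Matrix (Fin d) (Fin d) ℂ := Matrix.single l l 1

/-- Block-diagonal direct sum of `d` square blocks of size `m`. -/
def ddsum (d m : ℕ) (Ms : Fin d → Matrix (Fin m) (Fin m) ℂ) :
    Matrix (Fin (d * m)) (Fin (d * m)) ℂ :=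
  fun i j => if i.divNat = j.divNat then Ms i.divNat i.modNat j.modNat else 0

lemma d_mul_pow (d n : ℕ) : d * d ^ n = d ^ (n + 1) := by rw [pow_succ]; ring

/-- Base-`d` digit reversal of the `n` low digits of `j`. -/
def digitRevNat (d n j : ℕ) : ℕ := ∑ r ∈ Finset.range n, ((j / d ^ r) % d) * d ^ (n - 1 - r)

/-- The base-`d` digit-reversal permutation matrix on `ℂ^{d^n}`. -/
def PmD (d n : ℕ) : Matrix (Fin (d ^ n)) (Fin (d ^ n)) ℂ :=
  fun i j => if (i : ℕ) = digitRevNat d n (j : ℕ) then 1 else 0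



lemma digitRev_succ (d n j : ℕ) :
    digitRevNat d (n+1) j = digitRevNat d n (j / d) + (j % d) * d ^ n := by
  unfold digitRevNat
  rw [Finset.sum_range_succ']
  congr 1
  · apply Finset.sum_congr rfl
    intro r hr
    rw [Finset.mem_range] at hr
    congr 2
    · rw [pow_succ', Nat.div_div_eq_div_mul]
    · omega
  · simp

lemma digitRev_lt (d : ℕ) (hd : 0 < d) (n j : ℕ) : digitRevNat d n j < d ^ n := by
  induction n generalizing j with
  | zero => simp [digitRevNat]
  | succ n ih =>
    rw [digitRev_succ]
    have h1 := ih (j / d)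
    have h2 : j % d < d := Nat.mod_lt _ hd
    have h3 : (j % d) * d ^ n ≤ (d - 1) * d ^ n := Nat.mul_le_mul_right _ (by omega)
    have h4 : d ^ n + (d - 1) * d ^ n = d ^ (n+1) := by
      rw [pow_succ]
      have : d ^ n + (d - 1) * d ^ n = (1 + (d-1)) * d ^ n := by ring
      rw [this]; rw [show 1 + (d-1) = d by omega]; ring
    omega

lemma digitRev_split (d : ℕ) (hd : 0 < d) : ∀ n a b, a < d → b < d ^ n →
    digitRevNat d (n+1) (a * d ^ n + b) = a + d * digitRevNat d n b := by
  intro n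
  induction n with
  | zero =>
    intro a b ha hb
    have hb0 : b = 0 := by simpa using hb
    subst hb0
    rw [digitRev_succ]
    simp [digitRevNat, Nat.mod_eq_of_lt ha, Nat.div_eq_of_lt ha]
  | succ n ih =>
    intro a b ha hb
    rw [digitRev_succ]
    have hdiv : (a * d ^ (n+1) + b) / d = a * d ^ n + b / d := by
      rw [pow_succ]
      rw [show a * (d ^ n * d) + b = b + (a * d ^ n) * d by ring]
      rw [Nat.add_mul_div_right _ _ hd]
      omega
    have hmod : (a * d ^ (n+1) + b) % d = b % d := by
      rw [pow_succ]
      rw [show a * (d ^ n * d) + b = b + (a * d ^ n) * d by ring]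
      simp [Nat.add_mul_mod_self_right]
    have hb' : b / d < d ^ n := by
      rw [Nat.div_lt_iff_lt_mul hd]
      rw [pow_succ] at hb; exact hb
    rw [hdiv, hmod, ih a (b/d) ha hb', digitRev_succ]
    rw [pow_succ]
    ring

lemma digitRev_involution (d : ℕ) (hd : 0 < d) : ∀ n j, j < d ^ n →
    digitRevNat d n (digitRevNat d n j) = j := by
  intro n
  induction n with
  | zero =>
    intro j hj
    have : j = 0 := by simpa using hj
    subst this; simp [digitRevNat]
  | succ n ih =>
    intro j hj
    have hb : digitRevNat d n (j / d) < d ^ n := digitRev_lt d hd n _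
    have hj' : j / d < d ^ n := by
      rw [Nat.div_lt_iff_lt_mul hd]; rw [pow_succ] at hj; exact hj
    have h1 : digitRevNat d (n+1) j = j % d * d ^ n + digitRevNat d n (j / d) := by
      rw [digitRev_succ]; omega
    rw [h1, digitRev_split d hd n (j % d) _ (Nat.mod_lt _ hd) hb, ih _ hj']
    exact Nat.mod_add_div j d

/- ---------------- qomega lemmas ---------------- -/

lemma qomega_pow_left (a b : ℕ) (ha : a ≠ 0) (hb : b ≠ 0) :
    qomega (a * b) ^ a = qomega b := by
  unfold qomega
  rw [← Complex.exp_nat_mul]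
  congr 1
  have ha' : (a : ℂ) ≠ 0 := Nat.cast_ne_zero.mpr ha
  have hb' : (b : ℂ) ≠ 0 := Nat.cast_ne_zero.mpr hb
  push_cast
  field_simp

lemma qomega_pow_self (N : ℕ) (hN : N ≠ 0) : qomega N ^ N = 1 := by
  unfold qomega
  rw [← Complex.exp_nat_mul]
  have hN' : (N : ℂ) ≠ 0 := Nat.cast_ne_zero.mpr hN
  rw [show (N : ℂ) * (-(2 * Real.pi * Complex.I) / N) = -(2 * Real.pi * Complex.I) by
    field_simp]
  rw [Complex.exp_neg, Complex.exp_two_pi_mul_I]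
  simp

/- ---------------- matrix helper lemmas ---------------- -/

lemma pow_decomp (w : ℂ) (p q r X Y Z W : ℕ) :
    w ^ (p*X + Y + q*Z + r*W) = (w^p)^X * w^Y * (w^q)^Z * (w^r)^W := by
  rw [pow_add, pow_add, pow_add, pow_mul, pow_mul, pow_mul]

lemma castM_apply {a b : ℕ} (h : a = b) (A : Matrix (Fin a) (Fin a) ℂ) (i j : Fin b) :
    castM h A i j = A (Fin.cast h.symm i) (Fin.cast h.symm j) := rfl

lemma castM_mul {a b : ℕ} (h : a = b) (A B : Matrix (Fin a) (Fin a) ℂ) :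
    castM h A * castM h B = castM h (A * B) := by
  subst h
  ext i j
  simp [castM, Matrix.mul_apply, Fin.cast]

lemma fin_pair_ext {m n : ℕ} {i j : Fin (m * n)}
    (h1 : i.divNat = j.divNat) (h2 : i.modNat = j.modNat) : i = j := by
  apply Fin.ext
  have a1 : (i : ℕ) / n = (j : ℕ) / n := congrArg Fin.val h1
  have a2 : (i : ℕ) % n = (j : ℕ) % n := congrArg Fin.val h2
  have e1 := Nat.div_add_mod (i : ℕ) n
  have e2 := Nat.div_add_mod (j : ℕ) n
  calc (i : ℕ) = n * ((i:ℕ)/n) + (i:ℕ)%n := e1.symm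
    _ = n * ((j:ℕ)/n) + (j:ℕ)%n := by rw [a1, a2]
    _ = (j : ℕ) := e2

lemma PmD_mul_apply (d n : ℕ) (hd : 0 < d) (M : Matrix (Fin (d^n)) (Fin (d^n)) ℂ)
    (i k : Fin (d^n)) :
    (PmD d n * M) i k = M ⟨digitRevNat d n i, digitRev_lt d hd n i⟩ k := by
  rw [Matrix.mul_apply]
  rw [Finset.sum_eq_single (⟨digitRevNat d n i, digitRev_lt d hd n i⟩ : Fin (d^n))]
  · have h : (i:ℕ) = digitRevNat d n (digitRevNat d n (i:ℕ)) :=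
      (digitRev_involution d hd n i i.isLt).symm
    unfold PmD
    rw [if_pos h, one_mul]
  · intro b _ hb
    unfold PmD
    rw [if_neg, zero_mul]
    intro hcontra
    apply hb
    have hbv : digitRevNat d n ((i:ℕ)) = (b:ℕ) := by
      rw [hcontra]; exact digitRev_involution d hd n b b.isLt
    exact Fin.ext hbv.symm
  · intro h; exact absurd (Finset.mem_univ _) h

lemma ddsum_omega_apply (d n : ℕ) (j l : Fin (d * d ^ n)) :
    ddsum d (d ^ n) (fun l => OmegaD d n ^ (l : ℕ)) j l =
      if l = j then (qomega (d ^ (n+1)) ^ ((j.modNat : ℕ))) ^ ((j.divNat : ℕ)) else 0 := by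
  simp only [ddsum, OmegaD]
  by_cases h : l = j
  · subst h
    rw [if_pos rfl, if_pos rfl, Matrix.diagonal_pow, Matrix.diagonal_apply_eq]
    rfl
  · rw [if_neg h]
    by_cases h2 : l.divNat = j.divNat
    · rw [if_pos h2.symm, Matrix.diagonal_pow, Matrix.diagonal_apply_ne]
      intro hm
      exact h (fin_pair_ext h2.symm hm).symm
    · rw [if_neg (fun hh => h2 hh.symm)]

lemma BC_apply (d n : ℕ) (j k' : Fin (d * d ^ n)) :
    (ddsum d (d ^ n) (fun l => OmegaD d n ^ (l : ℕ)) *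
       kron (dftM d) (1 : Matrix (Fin (d ^ n)) (Fin (d ^ n)) ℂ)) j k' =
      (qomega (d ^ (n+1)) ^ ((j.modNat : ℕ))) ^ ((j.divNat : ℕ)) *
        (dftM d j.divNat k'.divNat * (if j.modNat = k'.modNat then 1 else 0)) := by
  rw [Matrix.mul_apply]
  rw [Finset.sum_eq_single j]
  · rw [ddsum_omega_apply, if_pos rfl]
    unfold kron
    rw [Matrix.one_apply]
  · intro b _ hb
    rw [ddsum_omega_apply, if_neg hb, zero_mul]
  · intro h; exact absurd (Finset.mem_univ _) h


theorem radix_d_splitting (d n : ℕ) (hd : 2 ≤ d) :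
    PmD d (n + 1) * dftM (d ^ (n + 1)) =
      castM (d_mul_pow d n)
          (kron (1 : Matrix (Fin d) (Fin d) ℂ) (PmD d n * dftM (d ^ n))) *
      castM (d_mul_pow d n) (ddsum d (d ^ n) (fun l => OmegaD d n ^ (l : ℕ))) *
      castM (d_mul_pow d n)
          (kron (dftM d) (1 : Matrix (Fin (d ^ n)) (Fin (d ^ n)) ℂ)) := by
  have hd0 : 0 < d := by omega
  have hm0 : 0 < d ^ n := pow_pos hd0 n
  rw [castM_mul, castM_mul, Matrix.mul_assoc]
  ext i k
  rw [PmD_mul_apply d (n+1) hd0, castM_apply]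
  set i' : Fin (d * d ^ n) := Fin.cast (d_mul_pow d n).symm i with hi'
  set k' : Fin (d * d ^ n) := Fin.cast (d_mul_pow d n).symm k with hk'
  rw [Matrix.mul_apply]
  set j₀ : Fin (d * d ^ n) := finProdFinEquiv (i'.divNat, k'.modNat) with hj₀
  have hsymm : (j₀.divNat, j₀.modNat) = (i'.divNat, k'.modNat) := by
    have := finProdFinEquiv.symm_apply_apply (i'.divNat, k'.modNat)
    rw [finProdFinEquiv_symm_apply] at this
    exact this
  have hj₀d : j₀.divNat = i'.divNat := congrArg Prod.fst hsymm
  have hj₀m : j₀.modNat = k'.modNat := congrArg Prod.snd hsymm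
  rw [Finset.sum_eq_single j₀]
  · -- main term
    rw [BC_apply]
    unfold kron
    rw [hj₀d, hj₀m, Matrix.one_apply_eq, if_pos rfl, one_mul, mul_one]
    rw [PmD_mul_apply d n hd0]
    -- now pure scalar computation
    have hiv : (i'.modNat : ℕ) = (i : ℕ) % d ^ n := rfl
    have hkv : (k'.modNat : ℕ) = (k : ℕ) % d ^ n := rfl
    have hkd : (k'.divNat : ℕ) = (k : ℕ) / d ^ n := rfl
    have hid : (i'.divNat : ℕ) = (i : ℕ) / d ^ n := rfl
    have ha : (i : ℕ) / d ^ n < d :=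
      Nat.div_lt_of_lt_mul (by rw [← pow_succ]; exact i.isLt)
    have hrev : digitRevNat d (n+1) (i:ℕ)
        = (i:ℕ)/d^n + d * digitRevNat d n ((i:ℕ) % d^n) := by
      conv_lhs => rw [show ((i:ℕ)) = (i:ℕ)/d^n * d^n + (i:ℕ) % d^n from
        (Nat.div_add_mod' _ _).symm]
      exact digitRev_split d hd0 n _ _ ha (Nat.mod_lt _ hm0)
    have hk : (k:ℕ) = (k:ℕ)/d^n * d^n + (k:ℕ) % d^n := (Nat.div_add_mod' _ _).symm
    have hexp : (digitRevNat d (n+1) (i:ℕ)) * (k:ℕ) =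
        d^n * (((i:ℕ)/d^n) * ((k:ℕ)/d^n)) + ((i:ℕ)/d^n) * ((k:ℕ) % d^n)
        + (d * d^n) * (digitRevNat d n ((i:ℕ) % d^n) * ((k:ℕ)/d^n))
        + d * (digitRevNat d n ((i:ℕ) % d^n) * ((k:ℕ) % d^n)) := by
      rw [hrev]
      conv_lhs => rw [hk]
      ring
    have h1 : qomega (d^(n+1)) ^ (d^n) = qomega d := by
      have := qomega_pow_left (d^n) d (by positivity) (by omega)
      rw [← pow_succ] at this
      exact this
    have h2 : qomega (d^(n+1)) ^ d = qomega (d^n) := by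
      have := qomega_pow_left d (d^n) (by omega) (by positivity)
      rw [d_mul_pow] at this
      exact this
    have h3 : qomega (d^(n+1)) ^ (d * d^n) = 1 := by
      rw [d_mul_pow]; exact qomega_pow_self _ (by positivity)
    have hsq : ((1/Real.sqrt ((d^(n+1) : ℕ)) : ℝ) : ℂ)
        = ((1/Real.sqrt ((d^n : ℕ)) : ℝ) : ℂ) * ((1/Real.sqrt ((d : ℕ)) : ℝ) : ℂ) := by
      have hs : Real.sqrt ((d^(n+1) : ℕ)) = Real.sqrt ((d^n : ℕ)) * Real.sqrt (d : ℕ) := by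
        rw [show ((d^(n+1):ℕ):ℝ) = ((d^n:ℕ):ℝ) * ((d:ℕ):ℝ) by push_cast [pow_succ]; ring]
        exact Real.sqrt_mul (by positivity) _
      rw [← Complex.ofReal_mul]
      congr 1
      rw [hs, one_div, mul_inv, one_div, one_div]
    simp only [dftM, Fin.coe_cast, hiv, hkv, hkd, hid]
    rw [hexp, pow_decomp, h1, h2, h3, one_pow, hsq]
    ring
  · intro b _ hb
    rw [BC_apply]
    unfold kron
    by_cases h1 : i'.divNat = b.divNat
    · by_cases h2 : b.modNat = k'.modNat
      · exact absurd (fin_pair_ext (h1.symm.trans hj₀d.symm) (h2.trans hj₀m.symm)) hb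
      · rw [if_neg h2]
        ring
    · rw [Matrix.one_apply_ne h1]
      ring
  · intro h; exact absurd (Finset.mem_univ _) h


end
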